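/- Let T, S be bounded linear operators on H admitting A-adjoints T♯, S♯ respectively. Set α₁ = ‖S‖_A·√( w_A(T)² − |‖Re_A(T)‖_A² − ‖Im_A(T)‖_A²|/2 ) and α₂ = ‖T‖_A·√( w_A(S)² − |‖Re_A(S)‖_A² − ‖Im_A(S)‖_A²|/2 ). Then w_A(T∘S ± S∘T) ≤ 2√2 · min{α₁, α₂}, for both choices of sign. -/

import Mathlib

/-!
Write `R = A^{1/2}`. Then `⟨x, y⟩_A = ⟪R x, R y⟫`, so the `A`-seminorm inherits Cauchy–Schwarz,
homogeneity and the parallelogram law from `H`.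

For `‖x‖_A = 1`, moving `T` and `S` across the `A`-inner product gives
`|⟨TSx, x⟩_A| + |⟨STx, x⟩_A| ≤ ‖S‖_A (‖Tx‖_A + ‖T♯x‖_A)`. Since `T = Re_A T + i Im_A T` and
`T♯ = Re_A T - i Im_A T`, the parallelogram law gives
`‖Tx‖_A² + ‖T♯x‖_A² ≤ 2 (p² + q²)` with `p = ‖Re_A T‖_A`, `q = ‖Im_A T‖_A`. Both are at most
`w_A(T)`: `Re_A T` and `Im_A T` are `A`-selfadjoint, so by polarization their `A`-norm is bounded by
their `A`-numerical radius, and `⟨Re_A T x, x⟩_A`, `⟨Im_A T x, x⟩_A` are, up to sign, the real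
and imaginary parts of `⟨Tx, x⟩_A`. Hence
`p² + q² = 2 max(p, q)² - |p² - q²| ≤ 2 w_A(T)² - |p² - q²|`, which is the bound with `α₁`;
exchanging `T` and `S` gives `α₂`.

The suprema defining `‖·‖_A` and `w_A` are finite because an operator with an `A`-adjoint is
`A`-bounded: for `B = T♯T` the numbers `cₙ = ‖Bⁿx‖_A` satisfy `cₙ² ≤ c₀ c₂ₙ` and grow at most like
`‖B‖ⁿ`, which forces `‖Tx‖_A² ≤ c₀ c₁ ≤ ‖B‖ c₀²`.
-/

noncomputable section

open Complex ContinuousLinearMap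

variable {H : Type*} [NormedAddCommGroup H] [InnerProductSpace ℂ H] [CompleteSpace H]

/-- The `A`-inner product `⟨x, y⟩_A = ⟨A x, y⟩`. -/
def innA (A : H →L[ℂ] H) (x y : H) : ℂ := @inner ℂ _ _ (A x) y

/-- The `A`-seminorm `‖x‖_A = √⟨A x, x⟩`. -/
def vnormA (A : H →L[ℂ] H) (x : H) : ℝ := Real.sqrt (innA A x x).re

/-- The `A`-operator seminorm `‖T‖_A = sup {‖T x‖_A : ‖x‖_A = 1}`. -/
def opnormA (A T : H →L[ℂ] H) : ℝ :=
  sSup {r : ℝ | ∃ x : H, vnormA A x = 1 ∧ r = vnormA A (T x)}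

/-- The `A`-numerical radius `w_A(T) = sup {|⟨T x, x⟩_A| : ‖x‖_A = 1}`. -/
def wA (A T : H →L[ℂ] H) : ℝ :=
  sSup {r : ℝ | ∃ x : H, vnormA A x = 1 ∧ r = ‖innA A (T x) x‖}

/-- The `A`-numerical range `W_A(T) = {⟨T x, x⟩_A : ‖x‖_A = 1}`. -/
def WA (A T : H →L[ℂ] H) : Set ℂ :=
  {z : ℂ | ∃ x : H, vnormA A x = 1 ∧ z = innA A (T x) x}

/-- `Re_A(T) = (T + T♯)/2`, given an `A`-adjoint `Ts` of `T`. -/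
def ReA (T Ts : H →L[ℂ] H) : H →L[ℂ] H := (2 : ℂ)⁻¹ • (T + Ts)

/-- `Im_A(T) = (T - T♯)/(2i)`, given an `A`-adjoint `Ts` of `T`. -/
def ImA (T Ts : H →L[ℂ] H) : H →L[ℂ] H := (2 * Complex.I)⁻¹ • (T - Ts)

/-- `Ts` is an `A`-adjoint of `T`, i.e. `A ∘ Ts = T* ∘ A`. -/
def IsAAdjoint (A T Ts : H →L[ℂ] H) : Prop :=
  A.comp Ts = (ContinuousLinearMap.adjoint T).comp A

open scoped InnerProductSpace

theorem le_of_forall_pow_two_pow_mul_le {a b d K : ℝ} (hb : 0 ≤ b) (hd : 0 < d)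
    (h : ∀ k : ℕ, a ^ 2 ^ k * d ≤ K * b ^ 2 ^ k) : a ≤ b := by
  by_contra! hba
  have ha : 0 < a := hb.trans_lt hba
  have hq : Filter.Tendsto (fun k : ℕ ↦ K * (b / a) ^ 2 ^ k) Filter.atTop (nhds 0) := by
    simpa using ((tendsto_pow_atTop_nhds_zero_of_lt_one (div_nonneg hb ha.le)
      ((div_lt_one ha).2 hba)).comp (tendsto_pow_atTop_atTop_of_one_lt one_lt_two)).const_mul K
  refine hd.not_ge (ge_of_tendsto' hq fun k ↦ ?_)
  rw [div_pow, mul_div_assoc', le_div_iff₀ (by positivity), mul_comm]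
  exact h k

theorem le_mul_of_sq_le_mul_double {c : ℕ → ℝ} {K M : ℝ} (hc : ∀ n, 0 ≤ c n) (hM : 0 ≤ M)
    (hsq : ∀ n, c n ^ 2 ≤ c 0 * c (2 * n)) (hgrowth : ∀ n, 0 < n → c n ≤ K * M ^ n) :
    c 1 ≤ M * c 0 := by
  have hpow : ∀ k : ℕ, c 1 ^ 2 ^ k ≤ c 0 ^ (2 ^ k - 1) * c (2 ^ k) := by
    intro k
    induction k with
    | zero => simp
    | succ k ih =>
      have h1 : 1 ≤ 2 ^ k := Nat.one_le_two_pow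
      calc c 1 ^ 2 ^ (k + 1) = (c 1 ^ 2 ^ k) ^ 2 := by rw [pow_succ, pow_mul]
        _ ≤ (c 0 ^ (2 ^ k - 1) * c (2 ^ k)) ^ 2 := by gcongr; exact pow_nonneg (hc 1) _
        _ = c 0 ^ (2 * (2 ^ k - 1)) * c (2 ^ k) ^ 2 := by ring
        _ ≤ c 0 ^ (2 * (2 ^ k - 1)) * (c 0 * c (2 * 2 ^ k)) := by
          gcongr
          · exact pow_nonneg (hc 0) _
          · exact hsq _
        _ = c 0 ^ (2 ^ (k + 1) - 1) * c (2 ^ (k + 1)) := by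
          rw [← mul_assoc, ← pow_succ, pow_succ' 2 k]
          congr 2
          omega
  rcases (hc 0).eq_or_lt with h0 | h0
  · have := hsq 1
    rw [← h0, zero_mul] at this
    rw [← h0, mul_zero]
    nlinarith [hc 1]
  refine le_of_forall_pow_two_pow_mul_le (mul_nonneg hM h0.le) h0 (K := K) fun k ↦ ?_
  have h1 : 1 ≤ 2 ^ k := Nat.one_le_two_pow
  calc c 1 ^ 2 ^ k * c 0 ≤ c 0 ^ (2 ^ k - 1) * c (2 ^ k) * c 0 := by gcongr; exact hpow k
    _ ≤ c 0 ^ (2 ^ k - 1) * (K * M ^ 2 ^ k) * c 0 := by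
        gcongr
        exact hgrowth _ (by positivity)
    _ = K * (M * c 0) ^ 2 ^ k := by
        rw [mul_pow, mul_right_comm, ← pow_succ, Nat.sub_add_cancel h1]
        ring

theorem sq_add_sq_le_two_mul_sq_sub_abs {p q w : ℝ} (hp : 0 ≤ p) (hq : 0 ≤ q) (hpw : p ≤ w)
    (hqw : q ≤ w) : p ^ 2 + q ^ 2 ≤ 2 * w ^ 2 - |p ^ 2 - q ^ 2| := by
  rcases abs_cases (p ^ 2 - q ^ 2) with ⟨h, -⟩ | ⟨h, -⟩ <;> rw [h] <;> nlinarith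

section

variable {E : Type*} [NormedAddCommGroup E] [InnerProductSpace ℂ E]

theorem vnormA_nonneg (A : E →L[ℂ] E) (x : E) : 0 ≤ vnormA A x := Real.sqrt_nonneg _

theorem innA_add_left (A : E →L[ℂ] E) (x y z : E) :
    innA A (x + y) z = innA A x z + innA A y z := by
  simp only [innA, map_add, inner_add_left]

theorem innA_sub_left (A : E →L[ℂ] E) (x y z : E) :
    innA A (x - y) z = innA A x z - innA A y z := by
  simp only [innA, map_sub, inner_sub_left]

theorem innA_smul_left (A : E →L[ℂ] E) (c : ℂ) (x y : E) :
    innA A (c • x) y = starRingEnd ℂ c * innA A x y := by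
  rw [innA, map_smul, inner_smul_left, innA]

theorem innA_smul_right (A : E →L[ℂ] E) (c : ℂ) (x y : E) :
    innA A x (c • y) = c * innA A x y := inner_smul_right _ _ _

theorem opnormA_nonneg (A T : E →L[ℂ] E) : 0 ≤ opnormA A T :=
  Real.sSup_nonneg <| by rintro _ ⟨x, -, rfl⟩; exact vnormA_nonneg A _

theorem wA_nonneg (A T : E →L[ℂ] E) : 0 ≤ wA A T :=
  Real.sSup_nonneg <| by rintro _ ⟨x, -, rfl⟩; exact norm_nonneg _

theorem wA_le_of_forall_norm_innA_le {A T : E →L[ℂ] E} {c : ℝ} (hc : 0 ≤ c)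
    (h : ∀ x, vnormA A x = 1 → ‖innA A (T x) x‖ ≤ c) : wA A T ≤ c :=
  Real.sSup_le (by rintro _ ⟨x, hx, rfl⟩; exact h x hx) hc

theorem I_mul_two_mul_I_inv : Complex.I * (2 * Complex.I)⁻¹ = 2⁻¹ := by
  field_simp

theorem reA_add_I_smul_imA (T Ts : E →L[ℂ] E) : ReA T Ts + Complex.I • ImA T Ts = T := by
  rw [ReA, ImA, smul_smul, I_mul_two_mul_I_inv]
  module

theorem reA_sub_I_smul_imA (T Ts : E →L[ℂ] E) : ReA T Ts - Complex.I • ImA T Ts = Ts := by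
  rw [ReA, ImA, smul_smul, I_mul_two_mul_I_inv]
  module

end

variable {A T Ts S Ss : H →L[ℂ] H}

theorem innA_eq_inner_sqrt (hA : A.IsPositive) (x y : H) :
    innA A x y = ⟪CFC.sqrt A x, CFC.sqrt A y⟫_ℂ := by
  have hR : IsSelfAdjoint (CFC.sqrt A) := (CFC.sqrt_nonneg A).isSelfAdjoint
  have hRR : CFC.sqrt A * CFC.sqrt A = A :=
    CFC.sqrt_mul_sqrt_self A ((nonneg_iff_isPositive A).2 hA)
  calc innA A x y = ⟪CFC.sqrt A (CFC.sqrt A x), y⟫_ℂ := by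
        rw [← mul_apply_eq_comp, hRR]; rfl
    _ = ⟪CFC.sqrt A x, CFC.sqrt A y⟫_ℂ := hR.isSymmetric _ _

theorem vnormA_eq_norm_sqrt (hA : A.IsPositive) (x : H) : vnormA A x = ‖CFC.sqrt A x‖ := by
  rw [vnormA, innA_eq_inner_sqrt hA, ← RCLike.re_eq_complex_re, inner_self_eq_norm_sq,
    Real.sqrt_sq (norm_nonneg _)]

theorem vnormA_sq (hA : A.IsPositive) (x : H) : vnormA A x ^ 2 = (innA A x x).re := by
  rw [vnormA_eq_norm_sqrt hA, innA_eq_inner_sqrt hA, ← RCLike.re_eq_complex_re,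
    inner_self_eq_norm_sq]

theorem norm_innA_le (hA : A.IsPositive) (x y : H) : ‖innA A x y‖ ≤ vnormA A x * vnormA A y := by
  rw [innA_eq_inner_sqrt hA, vnormA_eq_norm_sqrt hA, vnormA_eq_norm_sqrt hA]
  exact norm_inner_le_norm _ _

theorem innA_conj_symm (hA : A.IsPositive) (x y : H) :
    starRingEnd ℂ (innA A x y) = innA A y x := by
  rw [innA_eq_inner_sqrt hA, innA_eq_inner_sqrt hA, inner_conj_symm]

theorem vnormA_smul (hA : A.IsPositive) (c : ℂ) (x : H) : vnormA A (c • x) = ‖c‖ * vnormA A x := by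
  rw [vnormA_eq_norm_sqrt hA, vnormA_eq_norm_sqrt hA, map_smul, norm_smul]

theorem vnormA_add_sq_add_vnormA_sub_sq (hA : A.IsPositive) (x y : H) :
    vnormA A (x + y) ^ 2 + vnormA A (x - y) ^ 2 = 2 * (vnormA A x ^ 2 + vnormA A y ^ 2) := by
  simp only [vnormA_eq_norm_sqrt hA, map_add, map_sub]
  exact parallelogram_law_with_norm ℂ _ _

theorem vnormA_inv_smul_self (hA : A.IsPositive) {x : H} (hx : vnormA A x ≠ 0) :
    vnormA A (((vnormA A x)⁻¹ : ℂ) • x) = 1 := by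
  rw [vnormA_smul hA, ← Complex.ofReal_inv, Complex.norm_real, Real.norm_eq_abs,
    abs_of_nonneg (inv_nonneg.2 (vnormA_nonneg A x)), inv_mul_cancel₀ hx]

theorem norm_innA_smul_smul (hA : A.IsPositive) (c : ℂ) (x y : H) :
    ‖innA A (c • x) (c • y)‖ = ‖c‖ ^ 2 * ‖innA A x y‖ := by
  rw [innA_eq_inner_sqrt hA, innA_eq_inner_sqrt hA, map_smul, map_smul, inner_smul_left,
    inner_smul_right, norm_mul, norm_mul, Complex.norm_conj, ← mul_assoc, sq]

theorem isAAdjoint_iff_semiconjBy : IsAAdjoint A T Ts ↔ SemiconjBy A Ts (adjoint T) := Iff.rfl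

namespace IsAAdjoint

theorem symm (hA : A.IsPositive) (h : IsAAdjoint A T Ts) : IsAAdjoint A Ts T := by
  have h' := congrArg adjoint h
  rw [adjoint_comp, adjoint_comp, adjoint_adjoint, hA.isSelfAdjoint.adjoint_eq] at h'
  exact h'.symm

theorem comp (hT : IsAAdjoint A T Ts) (hS : IsAAdjoint A S Ss) :
    IsAAdjoint A (T.comp S) (Ss.comp Ts) := by
  rw [isAAdjoint_iff_semiconjBy, adjoint_comp]
  exact SemiconjBy.mul_right hS hT

theorem pow (h : IsAAdjoint A T Ts) (n : ℕ) : IsAAdjoint A (T ^ n) (Ts ^ n) := by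
  rw [isAAdjoint_iff_semiconjBy, ← star_eq_adjoint, star_pow, star_eq_adjoint]
  exact SemiconjBy.pow_right h n

theorem add (hT : IsAAdjoint A T Ts) (hS : IsAAdjoint A S Ss) :
    IsAAdjoint A (T + S) (Ts + Ss) := by
  rw [isAAdjoint_iff_semiconjBy, map_add]
  exact SemiconjBy.add_right hT hS

theorem sub (hT : IsAAdjoint A T Ts) (hS : IsAAdjoint A S Ss) :
    IsAAdjoint A (T - S) (Ts - Ss) := by
  rw [isAAdjoint_iff_semiconjBy, map_sub]
  exact SemiconjBy.sub_right hT hS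

theorem smul (h : IsAAdjoint A T Ts) (c : ℂ) : IsAAdjoint A (c • T) (starRingEnd ℂ c • Ts) := by
  rw [isAAdjoint_iff_semiconjBy, ← star_eq_adjoint, star_smul, star_eq_adjoint]
  exact SemiconjBy.smul_right h _

theorem innA_apply (hA : A.IsPositive) (h : IsAAdjoint A T Ts) (x y : H) :
    innA A (T x) y = innA A x (Ts y) := by
  have hAx : A (Ts y) = adjoint T (A y) := congrArg (· y) h
  calc innA A (T x) y = ⟪T x, A y⟫_ℂ := hA.isSelfAdjoint.isSymmetric _ _
    _ = ⟪x, A (Ts y)⟫_ℂ := by rw [hAx, adjoint_inner_right]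
    _ = innA A x (Ts y) := (hA.isSelfAdjoint.isSymmetric _ _).symm

theorem reA (hA : A.IsPositive) (h : IsAAdjoint A T Ts) : IsAAdjoint A (ReA T Ts) (ReA T Ts) := by
  have h' := (h.add (h.symm hA)).smul (2⁻¹ : ℂ)
  rwa [map_inv₀, Complex.conj_ofNat, add_comm Ts] at h'

theorem imA (hA : A.IsPositive) (h : IsAAdjoint A T Ts) : IsAAdjoint A (ImA T Ts) (ImA T Ts) := by
  have h' := (h.sub (h.symm hA)).smul (2 * Complex.I)⁻¹
  have hconj : starRingEnd ℂ (2 * Complex.I)⁻¹ = -(2 * Complex.I)⁻¹ := by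
    simp [map_inv₀, Complex.conj_I, map_ofNat]
  rwa [hconj, neg_smul, ← smul_neg, neg_sub] at h'

end IsAAdjoint

theorem innA_reA_apply_self (hA : A.IsPositive) (h : IsAAdjoint A T Ts) (x : H) :
    innA A (ReA T Ts x) x = (innA A (T x) x).re := by
  rw [ReA, smul_apply, innA_smul_left, add_apply, innA_add_left, (h.symm hA).innA_apply hA,
    ← innA_conj_symm hA (T x) x, Complex.add_conj, map_inv₀, Complex.conj_ofNat]
  push_cast
  ring

theorem innA_imA_apply_self (hA : A.IsPositive) (h : IsAAdjoint A T Ts) (x : H) :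
    innA A (ImA T Ts x) x = -(innA A (T x) x).im := by
  rw [ImA, smul_apply, innA_smul_left, sub_apply, innA_sub_left, (h.symm hA).innA_apply hA,
    ← innA_conj_symm hA (T x) x, Complex.sub_conj, map_inv₀, map_mul, Complex.conj_I,
    Complex.conj_ofNat]
  field_simp
  push_cast
  ring

theorem IsAAdjoint.vnormA_apply_le (hA : A.IsPositive) (h : IsAAdjoint A T Ts) (x : H) :
    vnormA A (T x) ≤ √‖Ts.comp T‖ * vnormA A x := by
  set B := Ts.comp T
  have hB : IsAAdjoint A B B := (h.symm hA).comp h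
  set c : ℕ → ℝ := fun n ↦ vnormA A ((B ^ n) x) with hc
  have hc0 : c 0 = vnormA A x := by simp [hc]
  have hsq : ∀ n, c n ^ 2 ≤ c 0 * c (2 * n) := by
    intro n
    calc c n ^ 2 = (innA A x ((B ^ (2 * n)) x)).re := by
          rw [vnormA_sq hA, (hB.pow n).innA_apply hA, two_mul, pow_add, mul_apply_eq_comp]
      _ ≤ ‖innA A x ((B ^ (2 * n)) x)‖ := Complex.re_le_norm _
      _ ≤ c 0 * c (2 * n) := hc0 ▸ norm_innA_le hA _ _
  have hgrowth : ∀ n, 0 < n → c n ≤ ‖CFC.sqrt A‖ * ‖x‖ * ‖B‖ ^ n := by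
    intro n hn
    calc c n = ‖CFC.sqrt A ((B ^ n) x)‖ := vnormA_eq_norm_sqrt hA _
      _ ≤ ‖CFC.sqrt A‖ * (‖B ^ n‖ * ‖x‖) :=
          (le_opNorm _ _).trans (by gcongr; exact le_opNorm _ _)
      _ ≤ ‖CFC.sqrt A‖ * (‖B‖ ^ n * ‖x‖) := by gcongr; exact norm_pow_le' B hn
      _ = ‖CFC.sqrt A‖ * ‖x‖ * ‖B‖ ^ n := by ring
  have hc1 : c 1 ≤ ‖B‖ * c 0 :=
    le_mul_of_sq_le_mul_double (fun n ↦ vnormA_nonneg A _) (norm_nonneg B) hsq hgrowth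
  have hTx : vnormA A (T x) ^ 2 ≤ ‖B‖ * vnormA A x ^ 2 := by
    calc vnormA A (T x) ^ 2 = (innA A x (B x)).re := by rw [vnormA_sq hA, h.innA_apply hA]; rfl
      _ ≤ ‖innA A x (B x)‖ := Complex.re_le_norm _
      _ ≤ c 0 * c 1 := by simpa [hc] using norm_innA_le hA x (B x)
      _ ≤ c 0 * (‖B‖ * c 0) := by gcongr; exact vnormA_nonneg A _
      _ = ‖B‖ * vnormA A x ^ 2 := by rw [hc0]; ring
  rw [← Real.sqrt_sq (vnormA_nonneg A (T x)), ← Real.sqrt_sq (vnormA_nonneg A x),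
    ← Real.sqrt_mul (norm_nonneg _)]
  exact Real.sqrt_le_sqrt hTx

theorem IsAAdjoint.vnormA_apply_le_opnormA (hA : A.IsPositive) (h : IsAAdjoint A T Ts) (x : H) :
    vnormA A (T x) ≤ opnormA A T * vnormA A x := by
  by_cases hx : vnormA A x = 0
  · simpa [hx] using h.vnormA_apply_le hA x
  have hbdd : BddAbove {r : ℝ | ∃ x : H, vnormA A x = 1 ∧ r = vnormA A (T x)} :=
    ⟨√‖Ts.comp T‖, by rintro _ ⟨y, hy, rfl⟩; simpa [hy] using h.vnormA_apply_le hA y⟩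
  have hu := le_csSup hbdd ⟨_, vnormA_inv_smul_self hA hx, rfl⟩
  rw [map_smul, vnormA_smul hA, ← Complex.ofReal_inv, Complex.norm_real, Real.norm_eq_abs,
    abs_of_nonneg (inv_nonneg.2 (vnormA_nonneg A x)), inv_mul_le_iff₀] at hu
  · exact hu.trans_eq (mul_comm _ _)
  · exact (vnormA_nonneg A x).lt_of_ne' hx

theorem IsAAdjoint.norm_innA_apply_le_wA (hA : A.IsPositive) (h : IsAAdjoint A T Ts) (x : H) :
    ‖innA A (T x) x‖ ≤ wA A T * vnormA A x ^ 2 := by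
  by_cases hx : vnormA A x = 0
  · simpa [hx] using norm_innA_le hA (T x) x
  have hbdd : BddAbove {r : ℝ | ∃ x : H, vnormA A x = 1 ∧ r = ‖innA A (T x) x‖} := by
    refine ⟨opnormA A T, ?_⟩
    rintro _ ⟨y, hy, rfl⟩
    calc ‖innA A (T y) y‖ ≤ vnormA A (T y) * vnormA A y := norm_innA_le hA _ _
      _ ≤ opnormA A T := by simpa [hy] using h.vnormA_apply_le_opnormA hA y
  have hu := le_csSup hbdd ⟨_, vnormA_inv_smul_self hA hx, rfl⟩
  rw [map_smul, norm_innA_smul_smul hA, ← Complex.ofReal_inv, Complex.norm_real, Real.norm_eq_abs,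
    abs_of_nonneg (inv_nonneg.2 (vnormA_nonneg A x)), inv_pow, inv_mul_le_iff₀] at hu
  · exact hu.trans_eq (mul_comm _ _)
  · exact pow_pos ((vnormA_nonneg A x).lt_of_ne' hx) 2

theorem IsAAdjoint.re_innA_polarization {P : H →L[ℂ] H} (hA : A.IsPositive)
    (hP : IsAAdjoint A P P) (x y : H) :
    4 * (innA A (P x) y).re
      = (innA A (P (x + y)) (x + y)).re - (innA A (P (x - y)) (x - y)).re := by
  have hyx : ⟪A (P y), x⟫_ℂ = starRingEnd ℂ ⟪A (P x), y⟫_ℂ := by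
    rw [← innA, ← innA, hP.innA_apply hA, innA_conj_symm hA]
  simp only [innA, map_add, map_sub, inner_add_left, inner_add_right, inner_sub_left,
    inner_sub_right, hyx, Complex.add_re, Complex.sub_re, Complex.conj_re]
  ring

theorem IsAAdjoint.opnormA_le_wA {P : H →L[ℂ] H} (hA : A.IsPositive) (hP : IsAAdjoint A P P) :
    opnormA A P ≤ wA A P := by
  refine Real.sSup_le ?_ (wA_nonneg A P)
  rintro _ ⟨x, hx, rfl⟩
  by_cases hPx : vnormA A (P x) = 0
  · rw [hPx]
    exact wA_nonneg A P
  set y := ((vnormA A (P x))⁻¹ : ℂ) • P x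
  have hy : vnormA A y = 1 := vnormA_inv_smul_self hA hPx
  have hre : (innA A (P x) y).re = vnormA A (P x) := by
    rw [innA_smul_right, ← Complex.ofReal_inv, Complex.re_ofReal_mul, ← vnormA_sq hA]
    field_simp
  have hplus : (innA A (P (x + y)) (x + y)).re ≤ wA A P * vnormA A (x + y) ^ 2 :=
    (Complex.re_le_norm _).trans (hP.norm_innA_apply_le_wA hA _)
  have hminus : -(innA A (P (x - y)) (x - y)).re ≤ wA A P * vnormA A (x - y) ^ 2 :=
    (neg_le_abs _).trans ((Complex.abs_re_le_norm _).trans (hP.norm_innA_apply_le_wA hA _))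
  have h4 : 4 * vnormA A (P x)
      ≤ wA A P * (vnormA A (x + y) ^ 2 + vnormA A (x - y) ^ 2) := by
    rw [← hre, hP.re_innA_polarization hA x y]
    linarith
  rw [vnormA_add_sq_add_vnormA_sub_sq hA, hx, hy] at h4
  linarith

theorem wA_reA_le (hA : A.IsPositive) (h : IsAAdjoint A T Ts) : wA A (ReA T Ts) ≤ wA A T :=
  wA_le_of_forall_norm_innA_le (wA_nonneg A T) fun x hx ↦ by
    rw [innA_reA_apply_self hA h, Complex.norm_real, Real.norm_eq_abs]
    exact (Complex.abs_re_le_norm _).trans (by simpa [hx] using h.norm_innA_apply_le_wA hA x)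

theorem wA_imA_le (hA : A.IsPositive) (h : IsAAdjoint A T Ts) : wA A (ImA T Ts) ≤ wA A T :=
  wA_le_of_forall_norm_innA_le (wA_nonneg A T) fun x hx ↦ by
    rw [innA_imA_apply_self hA h, ← Complex.ofReal_neg, Complex.norm_real, Real.norm_eq_abs,
      abs_neg]
    exact (Complex.abs_im_le_norm _).trans (by simpa [hx] using h.norm_innA_apply_le_wA hA x)

theorem opnormA_reA_le_wA (hA : A.IsPositive) (h : IsAAdjoint A T Ts) :
    opnormA A (ReA T Ts) ≤ wA A T :=
  ((h.reA hA).opnormA_le_wA hA).trans (wA_reA_le hA h)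

theorem opnormA_imA_le_wA (hA : A.IsPositive) (h : IsAAdjoint A T Ts) :
    opnormA A (ImA T Ts) ≤ wA A T :=
  ((h.imA hA).opnormA_le_wA hA).trans (wA_imA_le hA h)

theorem vnormA_apply_sq_add_vnormA_apply_sq (hA : A.IsPositive) (T Ts : H →L[ℂ] H) (x : H) :
    vnormA A (T x) ^ 2 + vnormA A (Ts x) ^ 2
      = 2 * (vnormA A (ReA T Ts x) ^ 2 + vnormA A (ImA T Ts x) ^ 2) := by
  have hT : ReA T Ts x + Complex.I • ImA T Ts x = T x := by
    rw [← smul_apply, ← add_apply, reA_add_I_smul_imA]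
  have hTs : ReA T Ts x - Complex.I • ImA T Ts x = Ts x := by
    rw [← smul_apply, ← sub_apply, reA_sub_I_smul_imA]
  rw [← hT, ← hTs, vnormA_add_sq_add_vnormA_sub_sq hA, vnormA_smul hA, Complex.norm_I, one_mul]

theorem IsAAdjoint.vnormA_adjoint_apply_le (hA : A.IsPositive) (h : IsAAdjoint A T Ts) (x : H) :
    vnormA A (Ts x) ≤ opnormA A T * vnormA A x := by
  have hsq : vnormA A (Ts x) ^ 2 ≤ opnormA A T * vnormA A x * vnormA A (Ts x) := by
    calc vnormA A (Ts x) ^ 2 = (innA A x (T (Ts x))).re := by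
          rw [vnormA_sq hA, (h.symm hA).innA_apply hA]
      _ ≤ ‖innA A x (T (Ts x))‖ := Complex.re_le_norm _
      _ ≤ vnormA A x * vnormA A (T (Ts x)) := norm_innA_le hA _ _
      _ ≤ vnormA A x * (opnormA A T * vnormA A (Ts x)) := by
          gcongr
          · exact vnormA_nonneg A x
          · exact h.vnormA_apply_le_opnormA hA _
      _ = opnormA A T * vnormA A x * vnormA A (Ts x) := by ring
  nlinarith [vnormA_nonneg A (Ts x), mul_nonneg (opnormA_nonneg A T) (vnormA_nonneg A x)]

theorem IsAAdjoint.vnormA_apply_add_vnormA_adjoint_apply_le (hA : A.IsPositive)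
    (h : IsAAdjoint A T Ts) {x : H} (hx : vnormA A x = 1) :
    vnormA A (T x) + vnormA A (Ts x) ≤ 2 * √2 *
      √(wA A T ^ 2 - |opnormA A (ReA T Ts) ^ 2 - opnormA A (ImA T Ts) ^ 2| / 2) := by
  set p := opnormA A (ReA T Ts)
  set q := opnormA A (ImA T Ts)
  have hRe : vnormA A (ReA T Ts x) ≤ p := by
    simpa [hx] using (h.reA hA).vnormA_apply_le_opnormA hA x
  have hIm : vnormA A (ImA T Ts x) ≤ q := by
    simpa [hx] using (h.imA hA).vnormA_apply_le_opnormA hA x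
  have hpq := sq_add_sq_le_two_mul_sq_sub_abs (opnormA_nonneg _ _) (opnormA_nonneg _ _)
    (opnormA_reA_le_wA hA h) (opnormA_imA_le_wA hA h)
  have hpar := vnormA_apply_sq_add_vnormA_apply_sq hA T Ts x
  have hsum : (vnormA A (T x) + vnormA A (Ts x)) ^ 2
      ≤ 8 * (wA A T ^ 2 - |p ^ 2 - q ^ 2| / 2) := by
    nlinarith [sq_nonneg (vnormA A (T x) - vnormA A (Ts x)),
      pow_le_pow_left₀ (vnormA_nonneg A _) hRe 2, pow_le_pow_left₀ (vnormA_nonneg A _) hIm 2]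
  calc vnormA A (T x) + vnormA A (Ts x) ≤ √(8 * (wA A T ^ 2 - |p ^ 2 - q ^ 2| / 2)) :=
        Real.le_sqrt_of_sq_le hsum
    _ = 2 * √2 * √(wA A T ^ 2 - |p ^ 2 - q ^ 2| / 2) := by
        rw [show (8 : ℝ) = 2 ^ 2 * 2 by norm_num, Real.sqrt_mul (by positivity),
          Real.sqrt_mul (by positivity), Real.sqrt_sq zero_le_two]

theorem IsAAdjoint.norm_innA_comp_add_norm_innA_comp_le (hA : A.IsPositive)
    (hT : IsAAdjoint A T Ts) (hS : IsAAdjoint A S Ss) {x : H} (hx : vnormA A x = 1) :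
    ‖innA A (T (S x)) x‖ + ‖innA A (S (T x)) x‖ ≤ 2 * √2 * (opnormA A S *
      √(wA A T ^ 2 - |opnormA A (ReA T Ts) ^ 2 - opnormA A (ImA T Ts) ^ 2| / 2)) := by
  rw [hT.innA_apply hA (S x) x, hS.innA_apply hA (T x) x]
  calc ‖innA A (S x) (Ts x)‖ + ‖innA A (T x) (Ss x)‖
      ≤ vnormA A (S x) * vnormA A (Ts x) + vnormA A (T x) * vnormA A (Ss x) :=
        add_le_add (norm_innA_le hA _ _) (norm_innA_le hA _ _)
    _ ≤ opnormA A S * vnormA A (Ts x) + vnormA A (T x) * opnormA A S := by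
        gcongr
        · exact vnormA_nonneg A _
        · simpa [hx] using hS.vnormA_apply_le_opnormA hA x
        · exact vnormA_nonneg A _
        · simpa [hx] using hS.vnormA_adjoint_apply_le hA x
    _ = opnormA A S * (vnormA A (T x) + vnormA A (Ts x)) := by ring
    _ ≤ opnormA A S * (2 * √2 *
          √(wA A T ^ 2 - |opnormA A (ReA T Ts) ^ 2 - opnormA A (ImA T Ts) ^ 2| / 2)) := by
        gcongr
        · exact opnormA_nonneg A S
        · exact hT.vnormA_apply_add_vnormA_adjoint_apply_le hA hx
    _ = 2 * √2 * (opnormA A S *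
          √(wA A T ^ 2 - |opnormA A (ReA T Ts) ^ 2 - opnormA A (ImA T Ts) ^ 2| / 2)) := by
        ring

theorem stmt18 (A T Ts S Ss : H →L[ℂ] H) (hA : A.IsPositive)
    (hT : IsAAdjoint A T Ts) (hS : IsAAdjoint A S Ss) :
    wA A (T.comp S + S.comp T) ≤
        2 * Real.sqrt 2 *
          min (opnormA A S *
              Real.sqrt (wA A T ^ 2 - |opnormA A (ReA T Ts) ^ 2 - opnormA A (ImA T Ts) ^ 2| / 2))
            (opnormA A T *
              Real.sqrt (wA A S ^ 2 - |opnormA A (ReA S Ss) ^ 2 - opnormA A (ImA S Ss) ^ 2| / 2)) ∧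
      wA A (T.comp S - S.comp T) ≤
        2 * Real.sqrt 2 *
          min (opnormA A S *
              Real.sqrt (wA A T ^ 2 - |opnormA A (ReA T Ts) ^ 2 - opnormA A (ImA T Ts) ^ 2| / 2))
            (opnormA A T *
              Real.sqrt (wA A S ^ 2 - |opnormA A (ReA S Ss) ^ 2 - opnormA A (ImA S Ss) ^ 2| / 2)) := by
  set α₁ := opnormA A S *
    Real.sqrt (wA A T ^ 2 - |opnormA A (ReA T Ts) ^ 2 - opnormA A (ImA T Ts) ^ 2| / 2)
  set α₂ := opnormA A T *
    Real.sqrt (wA A S ^ 2 - |opnormA A (ReA S Ss) ^ 2 - opnormA A (ImA S Ss) ^ 2| / 2)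
  have hα : 0 ≤ min α₁ α₂ := le_min (mul_nonneg (opnormA_nonneg A S) (Real.sqrt_nonneg _))
    (mul_nonneg (opnormA_nonneg A T) (Real.sqrt_nonneg _))
  have key : ∀ x, vnormA A x = 1 →
      ‖innA A (T (S x)) x‖ + ‖innA A (S (T x)) x‖ ≤ 2 * √2 * min α₁ α₂ := fun x hx ↦ by
    rw [mul_min_of_nonneg _ _ (by positivity)]
    exact le_min (hT.norm_innA_comp_add_norm_innA_comp_le hA hS hx)
      ((add_comm _ _).trans_le (hS.norm_innA_comp_add_norm_innA_comp_le hA hT hx))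
  constructor
  · refine wA_le_of_forall_norm_innA_le (by positivity) fun x hx ↦ ?_
    rw [add_apply, innA_add_left]
    exact (norm_add_le _ _).trans (key x hx)
  · refine wA_le_of_forall_norm_innA_le (by positivity) fun x hx ↦ ?_
    rw [sub_apply, innA_sub_left]
    exact (norm_sub_le _ _).trans (key x hx)
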